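/- arXiv:2405.04254 — 3 statements merged into one kernel-verified Lean document; each statement's English description precedes it below -/
import Mathlib

section
/- (Sufficient-decrease inequality, (A.2) in the proof of Theorem 2.) Let k ∈ ℕ, let β ∈ ℝ^p satisfy ‖β‖₀ ≤ k, and let β⁺ be a minimizer of γ ↦ h(γ; β) over the set {γ ∈ ℝ^p : ‖γ‖₀ ≤ k}. Then ℓ(β) ≥ ℓ(β⁺) + (1/2)(ϑ − ρ₁μ/n)‖β⁺ − β‖₂². -/
open scoped BigOperators RealInnerProductSpace

noncomputable section

/-- GLM negative log-likelihood `L(β) = (1/n) ∑ⱼ [b(Xⱼᵀβ) − yⱼ Xⱼᵀβ]`. -/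
def glmLoss {n p : ℕ} (X : Fin n → EuclideanSpace ℝ (Fin p)) (y : Fin n → ℝ)
    (b : ℝ → ℝ) (β : EuclideanSpace ℝ (Fin p)) : ℝ :=
  (1 / (n : ℝ)) * ∑ j, (b ⟪X j, β⟫ - y j * ⟪X j, β⟫)

/-- Surrogate loss `ℓ(β) = L(β) − βᵀv`. -/
def surrLoss {n p : ℕ} (X : Fin n → EuclideanSpace ℝ (Fin p)) (y : Fin n → ℝ)
    (b : ℝ → ℝ) (v : EuclideanSpace ℝ (Fin p)) (β : EuclideanSpace ℝ (Fin p)) : ℝ :=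
  glmLoss X y b β - ⟪β, v⟫

/-- Gradient of the surrogate loss:
`∇ℓ(β) = (1/n) ∑ⱼ (b'(Xⱼᵀβ) − yⱼ) Xⱼ − v`. -/
def surrGrad {n p : ℕ} (X : Fin n → EuclideanSpace ℝ (Fin p)) (y : Fin n → ℝ)
    (b : ℝ → ℝ) (v : EuclideanSpace ℝ (Fin p)) (β : EuclideanSpace ℝ (Fin p)) :
    EuclideanSpace ℝ (Fin p) :=
  (1 / (n : ℝ)) • (∑ j, (deriv b ⟪X j, β⟫ - y j) • X j) - v

/-- Quadratic approximation `h(γ; β) = ℓ(β) + ⟨γ − β, ∇ℓ(β)⟩ + (ϑ/2)‖γ − β‖₂²`. -/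
def quadApprox {n p : ℕ} (X : Fin n → EuclideanSpace ℝ (Fin p)) (y : Fin n → ℝ)
    (b : ℝ → ℝ) (v : EuclideanSpace ℝ (Fin p)) (ϑ : ℝ)
    (γ β : EuclideanSpace ℝ (Fin p)) : ℝ :=
  surrLoss X y b v β + ⟪γ - β, surrGrad X y b v β⟫ + ϑ / 2 * ‖γ - β‖ ^ 2

/-- The ℓ₀ "norm": number of nonzero coordinates. -/
def normZero {p : ℕ} (β : EuclideanSpace ℝ (Fin p)) : ℕ :=
  {j | β j ≠ 0}.ncard

/-!
Comparing the minimiser `β⁺` with the feasible point `β` gives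
`⟪β⁺ - β, ∇ℓ(β)⟫ + ϑ/2 ‖β⁺ - β‖² ≤ 0`. On the other hand `ℓ` is `ρ₁μ/n`-smooth: Taylor's bound
`b(t) ≤ b(s) + b'(s)(t - s) + μ/2 (t - s)²` along each row `Xⱼ`, summed, together with
`∑ⱼ ⟪Xⱼ, d⟫² = dᵀ𝕏ᵀ𝕏d ≤ ρ₁‖d‖²`, gives the descent inequality
`ℓ(β⁺) ≤ ℓ(β) + ⟪β⁺ - β, ∇ℓ(β)⟫ + ρ₁μ/(2n) ‖β⁺ - β‖²`. Adding the two inequalities gives the claim.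
-/

open Matrix

theorem ConvexOn.add_mul_sub_le_of_hasDerivAt {f : ℝ → ℝ} {f' x : ℝ}
    (hf : ConvexOn ℝ Set.univ f) (hfx : HasDerivAt f f' x) (y : ℝ) :
    f x + f' * (y - x) ≤ f y := by
  rcases lt_trichotomy x y with hxy | rfl | hxy
  · have := hf.le_slope_of_hasDerivAt trivial trivial hxy hfx
    rw [slope_def_field, le_div_iff₀ (sub_pos.2 hxy)] at this
    linarith
  · simp
  · have := hf.slope_le_of_hasDerivAt trivial trivial hxy hfx
    rw [slope_def_field, div_le_iff₀ (sub_pos.2 hxy)] at this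
    linarith

theorem le_add_deriv_mul_add_sq_of_deriv_deriv_le {f : ℝ → ℝ} {μ : ℝ}
    (hf : Differentiable ℝ f) (hf' : Differentiable ℝ (deriv f))
    (hf'' : ∀ x, deriv (deriv f) x ≤ μ) (s t : ℝ) :
    f t ≤ f s + deriv f s * (t - s) + μ / 2 * (t - s) ^ 2 := by
  -- `g` is convex, so it lies above its tangent at `s`, where `g' s = - f' s`.
  set g : ℝ → ℝ := fun u => μ / 2 * (u - s) ^ 2 - f u
  have hg : ∀ u, HasDerivAt g (μ * (u - s) - deriv f u) u := fun u =>
    (((((hasDerivAt_id' u).sub_const s).pow 2).const_mul (μ / 2)).sub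
      (hf u).hasDerivAt).congr_deriv (by ring)
  have hg' : ∀ u, HasDerivAt (fun u => μ * (u - s) - deriv f u) (μ - deriv (deriv f) u) u :=
    fun u => ((((hasDerivAt_id' u).sub_const s).const_mul μ).sub (hf' u).hasDerivAt).congr_deriv
      (by ring)
  have hconv : ConvexOn ℝ Set.univ g :=
    convexOn_of_hasDerivWithinAt2_nonneg convex_univ
      (fun u _ => (hg u).continuousAt.continuousWithinAt)
      (fun u _ => (hg u).hasDerivWithinAt) (fun u _ => (hg' u).hasDerivWithinAt)
      (fun u _ => sub_nonneg.2 (hf'' u))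
  have := hconv.add_mul_sub_le_of_hasDerivAt (hg s) t
  simp only [g, sub_self] at this
  linarith

theorem Matrix.IsHermitian.dotProduct_mulVec_le {ι : Type*} [Fintype ι] [DecidableEq ι]
    {A : Matrix ι ι ℝ} (hA : A.IsHermitian) {ρ : ℝ} (hρ : ∀ i, hA.eigenvalues i ≤ ρ)
    (x : EuclideanSpace ℝ ι) : ⇑x ⬝ᵥ (A *ᵥ ⇑x) ≤ ρ * ‖x‖ ^ 2 := by
  set B := hA.eigenvectorBasis
  have hcoord : ∀ i, ⟪B i, WithLp.toLp 2 (A *ᵥ ⇑x)⟫ = hA.eigenvalues i * ⟪B i, x⟫ := fun i => by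
    rw [EuclideanSpace.inner_eq_star_dotProduct, WithLp.ofLp_toLp, star_trivial, dotProduct_comm,
      dotProduct_mulVec, ← mulVec_transpose, ← conjTranspose_eq_transpose_of_trivial, hA.eq,
      hA.mulVec_eigenvectorBasis, smul_dotProduct, EuclideanSpace.inner_eq_star_dotProduct,
      star_trivial, dotProduct_comm, smul_eq_mul]
  calc ⇑x ⬝ᵥ (A *ᵥ ⇑x) = ∑ i, ⟪x, B i⟫ * ⟪B i, WithLp.toLp 2 (A *ᵥ ⇑x)⟫ := by
        rw [B.sum_inner_mul_inner, EuclideanSpace.inner_eq_star_dotProduct, WithLp.ofLp_toLp,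
          star_trivial, dotProduct_comm]
    _ = ∑ i, hA.eigenvalues i * ⟪B i, x⟫ ^ 2 := Finset.sum_congr rfl fun i _ => by
        rw [hcoord, real_inner_comm (B i) x]
        ring
    _ ≤ ∑ i, ρ * ⟪B i, x⟫ ^ 2 := by gcongr with i; exact hρ i
    _ = ρ * ‖x‖ ^ 2 := by rw [← Finset.mul_sum, B.sum_sq_inner_right]

theorem Matrix.isHermitian_transpose_mul_self {m k : Type*} [Fintype m] (M : Matrix m k ℝ) :
    (Mᵀ * M).IsHermitian := by
  rw [← conjTranspose_eq_transpose_of_trivial]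
  exact isHermitian_conjTranspose_mul_self M

def designMatrix {n p : ℕ} (X : Fin n → EuclideanSpace ℝ (Fin p)) : Matrix (Fin n) (Fin p) ℝ :=
  Matrix.of fun j i => X j i

theorem sum_inner_sq_le_of_eigenvalues_le {n p : ℕ} (X : Fin n → EuclideanSpace ℝ (Fin p))
    {ρ : ℝ} (hρ : ∀ i, (isHermitian_transpose_mul_self (designMatrix X)).eigenvalues i ≤ ρ)
    (d : EuclideanSpace ℝ (Fin p)) : ∑ j, ⟪X j, d⟫ ^ 2 ≤ ρ * ‖d‖ ^ 2 :=
  calc ∑ j, ⟪X j, d⟫ ^ 2 = ⇑d ⬝ᵥ (((designMatrix X)ᵀ * designMatrix X) *ᵥ ⇑d) := by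
        rw [← mulVec_mulVec, dotProduct_mulVec, vecMul_transpose]
        simp [dotProduct, designMatrix, PiLp.inner_apply, mulVec, sq, mul_comm]
    _ ≤ ρ * ‖d‖ ^ 2 := IsHermitian.dotProduct_mulVec_le _ hρ d

section GLM

variable {n p : ℕ} (X : Fin n → EuclideanSpace ℝ (Fin p)) (y : Fin n → ℝ) (b : ℝ → ℝ)
  (v : EuclideanSpace ℝ (Fin p))

theorem quadApprox_self (ϑ : ℝ) (β : EuclideanSpace ℝ (Fin p)) :
    quadApprox X y b v ϑ β β = surrLoss X y b v β := by
  simp [quadApprox]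

theorem surrLoss_eq_add_inner_surrGrad_add (β γ : EuclideanSpace ℝ (Fin p)) :
    surrLoss X y b v γ = surrLoss X y b v β + ⟪γ - β, surrGrad X y b v β⟫ +
      1 / n * ∑ j, (b ⟪X j, γ⟫ - b ⟪X j, β⟫ - deriv b ⟪X j, β⟫ * ⟪X j, γ - β⟫) := by
  have hsum : ∑ j, (b ⟪X j, γ⟫ - y j * ⟪X j, γ⟫) =
      ∑ j, (b ⟪X j, β⟫ - y j * ⟪X j, β⟫) + ∑ j, (deriv b ⟪X j, β⟫ - y j) * ⟪X j, γ - β⟫ +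
        ∑ j, (b ⟪X j, γ⟫ - b ⟪X j, β⟫ - deriv b ⟪X j, β⟫ * ⟪X j, γ - β⟫) := by
    rw [← Finset.sum_add_distrib, ← Finset.sum_add_distrib]
    exact Finset.sum_congr rfl fun j _ => by rw [inner_sub_right]; ring
  simp only [surrLoss, glmLoss, surrGrad, hsum, inner_sub_right, inner_smul_right, inner_sum,
    inner_sub_left, real_inner_comm (X _)]
  ring

theorem surrLoss_le_add_inner_surrGrad_add_sq {μ ρ : ℝ} (hb : Differentiable ℝ b)
    (hb' : Differentiable ℝ (deriv b)) (hb'' : ∀ θ, deriv (deriv b) θ ≤ μ) (hμ : 0 ≤ μ)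
    (hρ : ∀ i, (isHermitian_transpose_mul_self (designMatrix X)).eigenvalues i ≤ ρ)
    (β γ : EuclideanSpace ℝ (Fin p)) :
    surrLoss X y b v γ ≤
      surrLoss X y b v β + ⟪γ - β, surrGrad X y b v β⟫ + ρ * μ / n / 2 * ‖γ - β‖ ^ 2 := by
  have hrem : ∑ j, (b ⟪X j, γ⟫ - b ⟪X j, β⟫ - deriv b ⟪X j, β⟫ * ⟪X j, γ - β⟫) ≤
      μ / 2 * ∑ j, ⟪X j, γ - β⟫ ^ 2 := by
    rw [Finset.mul_sum]
    refine Finset.sum_le_sum fun j _ => ?_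
    have := le_add_deriv_mul_add_sq_of_deriv_deriv_le hb hb' hb'' ⟪X j, β⟫ ⟪X j, γ⟫
    rw [inner_sub_right]
    linarith
  have hquad := sum_inner_sq_le_of_eigenvalues_le X hρ (γ - β)
  rw [surrLoss_eq_add_inner_surrGrad_add X y b v β γ]
  calc _ ≤ surrLoss X y b v β + ⟪γ - β, surrGrad X y b v β⟫ +
        1 / n * (μ / 2 * (ρ * ‖γ - β‖ ^ 2)) := by
        gcongr
        exact hrem.trans (by gcongr)
    _ = _ := by ring

end GLM

/-- Sufficient-decrease inequality (A.2) in the proof of Theorem 2: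
`ℓ(β) ≥ ℓ(β⁺) + (1/2)(ϑ − ρ₁μ/n)‖β⁺ − β‖₂²`. -/
theorem surrLoss_sufficient_decrease
    {n p : ℕ}
    (X : Fin n → EuclideanSpace ℝ (Fin p)) (y : Fin n → ℝ)
    (b : ℝ → ℝ) (μ : ℝ) (hb : ContDiff ℝ 2 b)
    (hb'' : ∀ θ : ℝ, 0 ≤ deriv (deriv b) θ ∧ deriv (deriv b) θ ≤ μ)
    (v : EuclideanSpace ℝ (Fin p))
    (ρ₁ : ℝ)
    (hρ₁ : IsGreatest
      (Set.range (show (Matrix.transpose (Matrix.of fun j i => X j i : Matrix (Fin n) (Fin p) ℝ) *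
          (Matrix.of fun j i => X j i : Matrix (Fin n) (Fin p) ℝ)).IsHermitian by
          rw [← Matrix.conjTranspose_eq_transpose_of_trivial]
          exact Matrix.isHermitian_conjTranspose_mul_self _).eigenvalues) ρ₁)
    (ϑ : ℝ)
    (k : ℕ) (β βplus : EuclideanSpace ℝ (Fin p))
    (hβ : normZero β ≤ k)
    (hmin : ∀ γ : EuclideanSpace ℝ (Fin p), normZero γ ≤ k →
      quadApprox X y b v ϑ βplus β ≤ quadApprox X y b v ϑ γ β) :
    surrLoss X y b v βplus + 1 / 2 * (ϑ - ρ₁ * μ / n) * ‖βplus - β‖ ^ 2 ≤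
      surrLoss X y b v β := by
  have hdescent := surrLoss_le_add_inner_surrGrad_add_sq X y b v
    (hb.differentiable two_ne_zero) ((hb.iterate_deriv' 1 1).differentiable one_ne_zero)
    (fun θ => (hb'' θ).2) ((hb'' 0).1.trans (hb'' 0).2) (fun i => hρ₁.2 ⟨i, rfl⟩) β βplus
  have hstep := hmin β hβ
  rw [quadApprox_self, quadApprox] at hstep
  linarith
end
end

section
/- (Finite-termination bound from Theorem 2.) Let k ∈ ℕ and let (β^{(t)})_{t≥0} be a sequence in ℝ^p with ‖β^{(0)}‖₀ ≤ k such that for every t, β^{(t+1)} is a minimizer of γ ↦ h(γ; β^{(t)}) over {γ : ‖γ‖₀ ≤ k}. Suppose ϑ > ρ₁μ/n and that ℓ(β) ≥ ℓ* for every β with ‖β‖₀ ≤ k, for some ℓ* ∈ ℝ. Then for every K ∈ ℕ, min_{0 ≤ t ≤ K} ‖β^{(t+1)} − β^{(t)}‖₂² ≤ 2(ℓ(β^{(0)}) − ℓ*)/((K+1)(ϑ − ρ₁μ/n)). In particular, for any ε > 0, if (K+1) ≥ 2(ℓ(β^{(0)}) − ℓ*)/(ε²(ϑ − ρ₁μ/n))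 then there exists t ≤ K with ‖β^{(t+1)} − β^{(t)}‖₂ ≤ ε. -/
open scoped BigOperators RealInnerProductSpace

noncomputable section

/-!
By `b'' ≤ μ` and `𝕏ᵀ𝕏 ≤ ρ₁ I`, the surrogate loss lies below its quadratic approximation with
curvature `ρ₁μ/n` (the descent lemma). Comparing the minimiser `β^{(t+1)}` with the feasible point
`β^{(t)}` then gives the sufficient decrease
`ℓ(β^{(t+1)}) + (ϑ − ρ₁μ/n)/2 ‖β^{(t+1)} − β^{(t)}‖² ≤ ℓ(β^{(t)})`; telescoping against the lower
bound `ℓ*` bounds the sum of the first `K + 1` squared steps, hence their minimum.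
-/

open Matrix

theorem ConvexOn.add_deriv_mul_sub_le {f : ℝ → ℝ} (hf : ConvexOn ℝ Set.univ f) {x : ℝ}
    (hfx : DifferentiableAt ℝ f x) (y : ℝ) : f x + deriv f x * (y - x) ≤ f y := by
  rcases lt_trichotomy x y with hxy | rfl | hyx
  · have := hf.deriv_le_slope (Set.mem_univ x) (Set.mem_univ y) hxy hfx
    rw [slope_def_field, le_div_iff₀ (sub_pos.mpr hxy)] at this
    linarith
  · simp
  · have := hf.slope_le_deriv (Set.mem_univ y) (Set.mem_univ x) hyx hfx
    rw [slope_def_field, div_le_iff₀ (sub_pos.mpr hyx)] at this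
    linarith

/-- `x ↦ μ/2 x² − f x` is convex, and this is its tangent inequality at `x`. -/
theorem sub_sub_deriv_mul_le_of_deriv2_le {f : ℝ → ℝ} {μ : ℝ} (hf : ContDiff ℝ 2 f)
    (hf'' : ∀ x, deriv (deriv f) x ≤ μ) (x y : ℝ) :
    f y - f x - deriv f x * (y - x) ≤ μ / 2 * (y - x) ^ 2 := by
  obtain ⟨hf₁, -, hf₂⟩ := contDiff_succ_iff_deriv.mp (show ContDiff ℝ (1 + 1) f from hf)
  have hf' : Differentiable ℝ (deriv f) := hf₂.differentiable one_ne_zero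
  set g : ℝ → ℝ := fun x => μ / 2 * x ^ 2 - f x
  have hg' : ∀ x, HasDerivAt g (μ * x - deriv f x) x := fun x =>
    (((hasDerivAt_pow 2 x).const_mul (μ / 2)).fun_sub (hf₁ x).hasDerivAt).congr_deriv (by ring)
  have hderiv_g : deriv g = fun x => μ * x - deriv f x := funext fun x => (hg' x).deriv
  have hg'' : ∀ x, HasDerivAt (deriv g) (μ - deriv (deriv f) x) x := fun x => by
    rw [hderiv_g]
    simpa using ((hasDerivAt_id x).const_mul μ).fun_sub (hf' x).hasDerivAt
  have hconvex : ConvexOn ℝ Set.univ g :=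
    convexOn_univ_of_deriv2_nonneg (fun x => (hg' x).differentiableAt)
      (fun x => (hg'' x).differentiableAt) fun x => by
        simp only [Function.iterate_succ, Function.iterate_zero, Function.comp_apply, id_eq,
          (hg'' x).deriv]
        linarith [hf'' x]
  have := hconvex.add_deriv_mul_sub_le (hg' x).differentiableAt y
  simp only [hderiv_g, g] at this
  linarith

open scoped MatrixOrder in
theorem Matrix.IsHermitian.dotProduct_mulVec_le_s3 {m : Type*} [Fintype m] [DecidableEq m]
    {M : Matrix m m ℝ} (hM : M.IsHermitian) {r : ℝ} (hr : ∀ i, hM.eigenvalues i ≤ r)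
    (x : m → ℝ) : x ⬝ᵥ M *ᵥ x ≤ r * (x ⬝ᵥ x) := by
  have hle : M ≤ algebraMap ℝ _ r := by
    refine le_algebraMap_of_spectrum_le ?_ hM
    rw [hM.spectrum_real_eq_range_eigenvalues]
    rintro _ ⟨i, rfl⟩
    exact hr i
  simpa [Algebra.algebraMap_eq_smul_one, sub_mulVec, dotProduct_sub, smul_mulVec] using
    (Matrix.le_iff.mp hle).dotProduct_mulVec_nonneg x

section SurrogateLoss

variable {n p : ℕ} (X : Fin n → EuclideanSpace ℝ (Fin p)) (y : Fin n → ℝ) (b : ℝ → ℝ)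
  (v : EuclideanSpace ℝ (Fin p))

theorem sum_inner_sq_le {ρ₁ : ℝ}
    (hρ₁ : ∀ i, (isHermitian_conjTranspose_mul_self
      (Matrix.of fun j i => X j i : Matrix (Fin n) (Fin p) ℝ)).eigenvalues i ≤ ρ₁)
    (w : EuclideanSpace ℝ (Fin p)) : ∑ j, ⟪X j, w⟫ ^ 2 ≤ ρ₁ * ‖w‖ ^ 2 := by
  have hquad : ∑ j, ⟪X j, w⟫ ^ 2 = (w : Fin p → ℝ) ⬝ᵥ
      ((Matrix.of fun j i => X j i : Matrix (Fin n) (Fin p) ℝ)ᴴ * Matrix.of fun j i => X j i)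
        *ᵥ w := by
    rw [← mulVec_mulVec, dotProduct_mulVec, conjTranspose_eq_transpose_of_trivial,
      vecMul_transpose]
    simp [dotProduct, mulVec, sq, PiLp.inner_apply, mul_comm]
  have hnorm : ‖w‖ ^ 2 = (w : Fin p → ℝ) ⬝ᵥ w := by
    rw [EuclideanSpace.norm_sq_eq]
    simp [dotProduct, sq]
  rw [hquad, hnorm]
  exact IsHermitian.dotProduct_mulVec_le_s3 _ hρ₁ _

theorem surrLoss_sub_sub_inner_surrGrad (γ β : EuclideanSpace ℝ (Fin p)) :
    surrLoss X y b v γ - surrLoss X y b v β - ⟪γ - β, surrGrad X y b v β⟫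
      = (1 / (n : ℝ)) * ∑ j, (b ⟪X j, γ⟫ - b ⟪X j, β⟫
          - deriv b ⟪X j, β⟫ * (⟪X j, γ⟫ - ⟪X j, β⟫)) := by
  have hinner : ∀ j, ⟪γ - β, X j⟫ = ⟪X j, γ⟫ - ⟪X j, β⟫ := fun j => by
    rw [real_inner_comm, inner_sub_right]
  have hsum : ∑ j, (b ⟪X j, γ⟫ - b ⟪X j, β⟫ - deriv b ⟪X j, β⟫ * (⟪X j, γ⟫ - ⟪X j, β⟫))
      = ∑ j, (b ⟪X j, γ⟫ - y j * ⟪X j, γ⟫) - ∑ j, (b ⟪X j, β⟫ - y j * ⟪X j, β⟫)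
        - ∑ j, (deriv b ⟪X j, β⟫ - y j) * (⟪X j, γ⟫ - ⟪X j, β⟫) := by
    simp only [← Finset.sum_sub_distrib]
    exact Finset.sum_congr rfl fun j _ => by ring
  rw [surrGrad, inner_sub_right, real_inner_smul_right, inner_sum]
  simp only [real_inner_smul_right, hinner]
  simp only [surrLoss, glmLoss, inner_sub_left, hsum]
  ring

theorem surrLoss_le_quadApprox {μ ρ₁ : ℝ} (hμ : 0 ≤ μ) (hb : ContDiff ℝ 2 b)
    (hb'' : ∀ θ, deriv (deriv b) θ ≤ μ)
    (hρ₁ : ∀ i, (isHermitian_conjTranspose_mul_self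
      (Matrix.of fun j i => X j i : Matrix (Fin n) (Fin p) ℝ)).eigenvalues i ≤ ρ₁)
    (γ β : EuclideanSpace ℝ (Fin p)) :
    surrLoss X y b v γ ≤ quadApprox X y b v (ρ₁ * μ / n) γ β := by
  have hsum : ∑ j, (b ⟪X j, γ⟫ - b ⟪X j, β⟫ - deriv b ⟪X j, β⟫ * (⟪X j, γ⟫ - ⟪X j, β⟫))
      ≤ μ / 2 * (ρ₁ * ‖γ - β‖ ^ 2) :=
    calc _ ≤ ∑ j, μ / 2 * ⟪X j, γ - β⟫ ^ 2 := Finset.sum_le_sum fun j _ => by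
            rw [inner_sub_right]
            exact sub_sub_deriv_mul_le_of_deriv2_le hb hb'' _ _
      _ = μ / 2 * ∑ j, ⟪X j, γ - β⟫ ^ 2 := (Finset.mul_sum ..).symm
      _ ≤ μ / 2 * (ρ₁ * ‖γ - β‖ ^ 2) := by gcongr; exact sum_inner_sq_le X hρ₁ _
  have hscaled := mul_le_mul_of_nonneg_left hsum (by positivity : (0 : ℝ) ≤ 1 / (n : ℝ))
  rw [← surrLoss_sub_sub_inner_surrGrad X y b v] at hscaled
  rw [quadApprox]
  linarith [show 1 / (n : ℝ) * (μ / 2 * (ρ₁ * ‖γ - β‖ ^ 2)) = ρ₁ * μ / n / 2 * ‖γ - β‖ ^ 2 by ring]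

theorem surrLoss_add_sq_le {L ϑ : ℝ} {γ β : EuclideanSpace ℝ (Fin p)}
    (hL : surrLoss X y b v γ ≤ quadApprox X y b v L γ β)
    (hγ : quadApprox X y b v ϑ γ β ≤ quadApprox X y b v ϑ β β) :
    surrLoss X y b v γ + (ϑ - L) / 2 * ‖γ - β‖ ^ 2 ≤ surrLoss X y b v β := by
  simp only [quadApprox, sub_self, inner_zero_left, norm_zero] at hL hγ
  linarith

end SurrogateLoss

theorem exists_le_of_sufficient_decrease {f d : ℕ → ℝ} {c m : ℝ} (hc : 0 < c)
    (hdec : ∀ t, f (t + 1) + c / 2 * d t ≤ f t) (hm : ∀ t, m ≤ f t) (K : ℕ) :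
    ∃ t ≤ K, d t ≤ 2 * (f 0 - m) / ((K + 1) * c) := by
  have htelescope : c / 2 * ∑ t ∈ Finset.range (K + 1), d t ≤ f 0 - f (K + 1) := by
    rw [Finset.mul_sum, ← Finset.sum_range_sub']
    exact Finset.sum_le_sum fun t _ => by linarith [hdec t]
  have hsum : ∑ t ∈ Finset.range (K + 1), d t
      ≤ ∑ _t ∈ Finset.range (K + 1), 2 * (f 0 - m) / ((K + 1) * c) := by
    rw [Finset.sum_const, Finset.card_range, nsmul_eq_mul, Nat.cast_add_one, mul_div_assoc',
      mul_div_mul_left _ _ (by positivity), le_div_iff₀ hc]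
    linarith [hm (K + 1)]
  obtain ⟨t, ht, hle⟩ := Finset.exists_le_of_sum_le Finset.nonempty_range_add_one hsum
  exact ⟨t, Nat.lt_succ_iff.mp (Finset.mem_range.mp ht), hle⟩

theorem DIHT_finite_termination_general
    {n p : ℕ}
    (X : Fin n → EuclideanSpace ℝ (Fin p)) (y : Fin n → ℝ)
    (b : ℝ → ℝ) (μ : ℝ) (hb : ContDiff ℝ 2 b)
    (hb'' : ∀ θ : ℝ, 0 ≤ deriv (deriv b) θ ∧ deriv (deriv b) θ ≤ μ)
    (v : EuclideanSpace ℝ (Fin p))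
    (ρ₁ : ℝ)
    (hρ₁ : IsGreatest
      (Set.range (Matrix.isHermitian_conjTranspose_mul_self
        (Matrix.of fun j i => X j i : Matrix (Fin n) (Fin p) ℝ)).eigenvalues) ρ₁)
    (ϑ : ℝ) (hϑ : ρ₁ * μ / n < ϑ)
    (k : ℕ) (B : ℕ → EuclideanSpace ℝ (Fin p))
    (hB0 : normZero (B 0) ≤ k)
    (hBstep : ∀ t : ℕ, normZero (B (t + 1)) ≤ k ∧
      ∀ γ : EuclideanSpace ℝ (Fin p), normZero γ ≤ k →
        quadApprox X y b v ϑ (B (t + 1)) (B t) ≤ quadApprox X y b v ϑ γ (B t))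
    (lstar : ℝ)
    (hlb : ∀ β : EuclideanSpace ℝ (Fin p), normZero β ≤ k → lstar ≤ surrLoss X y b v β) :
    (∀ K : ℕ, ∃ t ≤ K, ‖B (t + 1) - B t‖ ^ 2 ≤
        2 * (surrLoss X y b v (B 0) - lstar) / ((K + 1) * (ϑ - ρ₁ * μ / n))) ∧
    (∀ ε : ℝ, 0 < ε → ∀ K : ℕ,
        2 * (surrLoss X y b v (B 0) - lstar) / (ε ^ 2 * (ϑ - ρ₁ * μ / n)) ≤ (K + 1 : ℝ) →
        ∃ t ≤ K, ‖B (t + 1) - B t‖ ≤ ε) := by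
  have hμ : 0 ≤ μ := (hb'' 0).1.trans (hb'' 0).2
  have hgap : 0 < ϑ - ρ₁ * μ / n := sub_pos.mpr hϑ
  have hsparse : ∀ t, normZero (B t) ≤ k
    | 0 => hB0
    | t + 1 => (hBstep t).1
  have hdecrease : ∀ t, surrLoss X y b v (B (t + 1))
      + (ϑ - ρ₁ * μ / n) / 2 * ‖B (t + 1) - B t‖ ^ 2 ≤ surrLoss X y b v (B t) := fun t =>
    surrLoss_add_sq_le X y b v
      (surrLoss_le_quadApprox X y b v hμ hb (fun θ => (hb'' θ).2) (fun i => hρ₁.2 ⟨i, rfl⟩) _ _)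
      ((hBstep t).2 _ (hsparse t))
  have hbound := exists_le_of_sufficient_decrease hgap hdecrease fun t => hlb _ (hsparse t)
  refine ⟨hbound, fun ε hε K hK => ?_⟩
  obtain ⟨t, htK, ht⟩ := hbound K
  refine ⟨t, htK, pow_le_pow_iff_left₀ (norm_nonneg _) hε.le two_ne_zero |>.mp (ht.trans ?_)⟩
  rw [div_le_iff₀ (by positivity)] at hK ⊢
  linarith

/-- Finite-termination bound from Theorem 2: along the DIHT iterates,
`min_{0 ≤ t ≤ K} ‖β^{(t+1)} − β^{(t)}‖₂² ≤ 2(ℓ(β⁰) − ℓ*)/((K+1)(ϑ − ρ₁μ/n))`,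
and the algorithm meets the tolerance `ε` within the stated number of steps. -/
theorem DIHT_finite_termination
    {n p : ℕ} (hn : 0 < n)
    (X : Fin n → EuclideanSpace ℝ (Fin p)) (y : Fin n → ℝ)
    (b : ℝ → ℝ) (μ : ℝ) (hμ : 0 < μ) (hb : ContDiff ℝ 2 b)
    (hb'' : ∀ θ : ℝ, 0 ≤ deriv (deriv b) θ ∧ deriv (deriv b) θ ≤ μ)
    (v : EuclideanSpace ℝ (Fin p))
    (ρ₁ : ℝ)
    (hρ₁ : IsGreatest
      (Set.range (Matrix.isHermitian_conjTranspose_mul_self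
        (Matrix.of fun j i => X j i : Matrix (Fin n) (Fin p) ℝ)).eigenvalues) ρ₁)
    (ϑ : ℝ) (hϑpos : 0 < ϑ) (hϑ : ρ₁ * μ / n < ϑ)
    (k : ℕ) (B : ℕ → EuclideanSpace ℝ (Fin p))
    (hB0 : normZero (B 0) ≤ k)
    (hBstep : ∀ t : ℕ, normZero (B (t + 1)) ≤ k ∧
      ∀ γ : EuclideanSpace ℝ (Fin p), normZero γ ≤ k →
        quadApprox X y b v ϑ (B (t + 1)) (B t) ≤ quadApprox X y b v ϑ γ (B t))
    (lstar : ℝ)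
    (hlb : ∀ β : EuclideanSpace ℝ (Fin p), normZero β ≤ k → lstar ≤ surrLoss X y b v β) :
    (∀ K : ℕ, ∃ t ≤ K, ‖B (t + 1) - B t‖ ^ 2 ≤
        2 * (surrLoss X y b v (B 0) - lstar) / ((K + 1) * (ϑ - ρ₁ * μ / n))) ∧
    (∀ ε : ℝ, 0 < ε → ∀ K : ℕ,
        2 * (surrLoss X y b v (B 0) - lstar) / (ε ^ 2 * (ϑ - ρ₁ * μ / n)) ≤ (K + 1 : ℝ) →
        ∃ t ≤ K, ‖B (t + 1) - B t‖ ≤ ε) :=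
  DIHT_finite_termination_general X y b μ hb hb'' v ρ₁ hρ₁ ϑ hϑ k B hB0 hBstep lstar hlb
end
end

section
/- (Deterministic core of Lemma 2: Lasso error bound under a restricted eigenvalue condition.) Let L : ℝ^p → ℝ be convex and twice continuously differentiable, let β* ∈ ℝ^p with support S* = {j : β*_j ≠ 0} of cardinality q ≥ 1, let λ > 0, and let β̃ be a global minimizer of β ↦ L(β) + λ‖β‖₁. Suppose ‖∇L(β*)‖_∞ ≤ λ/2, and suppose there is b₁ > 0 such that for every β on the line segment between β* and β̃ and every w ≠ 0 with ‖w_{S*ᶜ}‖₁ ≤ 3‖w_{S*}‖₁, one has wᵀ∇²L(β)w ≥ b₁‖w_{S*}‖₂². Then ‖β̃ − β*‖₂ ≤ ‖β̃ − β*‖₁ ≤ 16 q λ / b₁. -/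
/-!
Write `w = β̃ - β*`. Minimality of `β̃` bounds `L β̃ - L β*` by `λ (‖w_{S*}‖₁ - ‖w_{S*ᶜ}‖₁)`,
while convexity and `‖∇L(β*)‖_∞ ≤ λ/2` bound it below by `-λ/2 ‖w‖₁`; hence `w` lies in the cone
`‖w_{S*ᶜ}‖₁ ≤ 3 ‖w_{S*}‖₁`. On that cone the restricted eigenvalue bound along the segment gives
the second-order gain `L β̃ ≥ L β* + ∇L(β*) w + b₁ ‖w_{S*}‖₂² / 2`, so
`b₁ ‖w_{S*}‖₂² ≤ 3 λ ‖w_{S*}‖₁`. Cauchy–Schwarz `‖w_{S*}‖₁² ≤ q ‖w_{S*}‖₂²` turns this into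
`‖w_{S*}‖₁ ≤ 3 q λ / b₁`, and the cone gives `‖w‖₁ ≤ 4 ‖w_{S*}‖₁ ≤ 12 q λ / b₁`.
-/

open scoped BigOperators Classical

open Finset Set AffineMap

theorem monotoneOn_Icc_of_hasDerivAt_nonneg {g g' : ℝ → ℝ} {a b : ℝ}
    (hg : ∀ t ∈ Icc a b, HasDerivAt g (g' t) t) (hg' : ∀ t ∈ Icc a b, 0 ≤ g' t) :
    MonotoneOn g (Icc a b) :=
  monotoneOn_of_hasDerivWithinAt_nonneg (convex_Icc a b) (HasDerivAt.continuousOn hg)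
    (fun t ht => (hg t (interior_subset ht)).hasDerivWithinAt) fun t ht => hg' t (interior_subset ht)

theorem taylor_lower_bound_of_le_deriv2 {f f' f'' : ℝ → ℝ} {a b m : ℝ} (hab : a ≤ b)
    (hf : ∀ t ∈ Icc a b, HasDerivAt f (f' t) t) (hf' : ∀ t ∈ Icc a b, HasDerivAt f' (f'' t) t)
    (hm : ∀ t ∈ Icc a b, m ≤ f'' t) :
    f a + f' a * (b - a) + m / 2 * (b - a) ^ 2 ≤ f b := by
  have hslope : MonotoneOn (fun t => f' t - m * t) (Icc a b) :=
    monotoneOn_Icc_of_hasDerivAt_nonneg (fun t ht => (hf' t ht).sub ((hasDerivAt_id' t).const_mul m))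
      fun t ht => by linarith [hm t ht]
  have hgap : MonotoneOn (fun t => f t - f' a * t - m / 2 * (t - a) ^ 2) (Icc a b) := by
    refine monotoneOn_Icc_of_hasDerivAt_nonneg (fun t ht => ((hf t ht).sub
      ((hasDerivAt_id' t).const_mul (f' a))).sub
        ((((hasDerivAt_id' t).sub_const a).pow 2).const_mul (m / 2))) fun t ht => ?_
    have := hslope (left_mem_Icc.2 hab) ht ht.1
    simp only at this ⊢
    nlinarith
  have := hgap (left_mem_Icc.2 hab) (right_mem_Icc.2 hab) hab
  simp only [sub_self] at this
  nlinarith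

section LineRestriction

variable {E : Type*} [NormedAddCommGroup E] [NormedSpace ℝ E] {f : E → ℝ} {x y : E}

theorem ConvexOn.add_fderiv_sub_le {s : Set E} (hf : ConvexOn ℝ s f) (hx : x ∈ s) (hy : y ∈ s)
    (hdiff : DifferentiableAt ℝ f x) : f x + fderiv ℝ f x (y - x) ≤ f y := by
  have hderiv : HasDerivAt (f ∘ lineMap (k := ℝ) x y) (fderiv ℝ f x (y - x)) 0 := by
    rw [← lineMap_apply_zero (k := ℝ) x y] at hdiff
    simpa using hdiff.hasFDerivAt.comp_hasDerivAt 0 hasDerivAt_lineMap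
  have := (hf.comp_affineMap (lineMap x y)).le_slope_of_hasDerivAt (x := 0) (y := 1)
    (by simpa using hx) (by simpa using hy) one_pos hderiv
  simp only [slope_def_field, Function.comp_apply, lineMap_apply_zero, lineMap_apply_one,
    sub_zero, div_one] at this
  linarith

theorem ContDiff.taylor_lower_bound_of_le_fderiv2 {m : ℝ} (hf : ContDiff ℝ 2 f)
    (hm : ∀ z ∈ segment ℝ x y, m ≤ fderiv ℝ (fderiv ℝ f) z (y - x) (y - x)) :
    f x + fderiv ℝ f x (y - x) + m / 2 ≤ f y := by
  have hdiff : Differentiable ℝ f := hf.differentiable two_ne_zero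
  have hdiff' : Differentiable ℝ (fderiv ℝ f) :=
    (hf.fderiv_right (m := 1) (by norm_num)).differentiable one_ne_zero
  have h1 (t : ℝ) : HasDerivAt (fun t => f (AffineMap.lineMap x y t))
      (fderiv ℝ f (AffineMap.lineMap x y t) (y - x)) t :=
    (hdiff _).hasFDerivAt.comp_hasDerivAt t hasDerivAt_lineMap
  have h2 (t : ℝ) : HasDerivAt (fun t => fderiv ℝ f (AffineMap.lineMap x y t) (y - x))
      (fderiv ℝ (fderiv ℝ f) (AffineMap.lineMap x y t) (y - x) (y - x)) t :=
    ((hdiff' _).hasFDerivAt.comp_hasDerivAt t hasDerivAt_lineMap).clm_apply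
      (hasDerivAt_const t (y - x)) |>.congr_deriv (by simp only [map_zero, add_zero])
  have := taylor_lower_bound_of_le_deriv2 zero_le_one (fun t _ => h1 t) (fun t _ => h2 t)
    (fun t ht => hm _ (segment_eq_image_lineMap ℝ x y ▸ mem_image_of_mem _ ht))
  simpa only [lineMap_apply_zero, lineMap_apply_one, sub_zero, one_pow, mul_one] using this

end LineRestriction

section Coordinates

variable {ι : Type*} [Fintype ι]

theorem EuclideanSpace.norm_le_sum_abs (x : EuclideanSpace ℝ ι) : ‖x‖ ≤ ∑ i, |x i| := by
  calc ‖x‖ = ‖∑ i, x i • EuclideanSpace.basisFun ι ℝ i‖ := by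
        congr 1; exact ((EuclideanSpace.basisFun ι ℝ).sum_repr x).symm
    _ ≤ ∑ i, |x i| := (norm_sum_le _ _).trans_eq (by simp [norm_smul])

theorem EuclideanSpace.abs_apply_le_mul_sum_abs [DecidableEq ι]
    (φ : EuclideanSpace ℝ ι →L[ℝ] ℝ) {c : ℝ} (hφ : ∀ i, |φ (EuclideanSpace.single i 1)| ≤ c) (w : EuclideanSpace ℝ ι) :
    |φ w| ≤ c * ∑ i, |w i| := by
  calc |φ w| = |∑ i, w i * φ (EuclideanSpace.single i 1)| := by
        conv_lhs => rw [← (EuclideanSpace.basisFun ι ℝ).sum_repr w]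
        simp
    _ ≤ ∑ i, |w i| * c := (abs_sum_le_sum_abs _ _).trans <| sum_le_sum fun i _ => by
        rw [abs_mul]; exact mul_le_mul_of_nonneg_left (hφ i) (abs_nonneg _)
    _ = c * ∑ i, |w i| := by rw [← sum_mul, mul_comm]

theorem EuclideanSpace.sum_abs_sub_sum_abs_le (x y : EuclideanSpace ℝ ι) :
    ∑ i, |x i| - ∑ i, |y i| ≤
      ∑ i ∈ univ.filter (fun i => x i ≠ 0), |(y - x) i| -
        ∑ i ∈ univ.filter (fun i => x i = 0), |(y - x) i| := by
  set S := univ.filter (fun i => x i ≠ 0)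
  set T := univ.filter (fun i => x i = 0)
  have hsplit (g : ι → ℝ) : ∑ i, g i = ∑ i ∈ S, g i + ∑ i ∈ T, g i := by
    rw [← sum_filter_add_sum_filter_not univ (fun i => x i ≠ 0)]
    simp only [not_not, S, T]
  have hS : ∑ i ∈ S, |x i| - ∑ i ∈ S, |y i| ≤ ∑ i ∈ S, |(y - x) i| := by
    rw [← sum_sub_distrib]
    exact sum_le_sum fun i _ => by simpa [abs_sub_comm] using abs_sub_abs_le_abs_sub (x i) (y i)
  have hxT : ∑ i ∈ T, |x i| = 0 := sum_eq_zero fun i hi => by simp [(mem_filter.1 hi).2]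
  have hyT : ∑ i ∈ T, |y i| = ∑ i ∈ T, |(y - x) i| :=
    sum_congr rfl fun i hi => by simp [(mem_filter.1 hi).2]
  rw [hsplit fun i => |x i|, hsplit fun i => |y i|]
  linarith

end Coordinates

theorem Finset.mul_sum_abs_le_card_mul_of_mul_sum_sq_le {ι : Type*} {s : Finset ι} {w : ι → ℝ}
    {b k : ℝ} (hb : 0 ≤ b) (hk : 0 ≤ k)
    (h : b * ∑ i ∈ s, w i ^ 2 ≤ k * ∑ i ∈ s, |w i|) :
    b * ∑ i ∈ s, |w i| ≤ #s * k := by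
  set A := ∑ i ∈ s, |w i|
  have hCS : A ^ 2 ≤ #s * ∑ i ∈ s, w i ^ 2 := by
    simpa only [sq_abs] using sq_sum_le_card_mul_sum_sq (s := s) (f := fun i => |w i|)
  have hA0 : 0 ≤ A := sum_nonneg fun _ _ => abs_nonneg _
  rcases hA0.eq_or_lt with hA | hA
  · rw [← hA, mul_zero]
    positivity
  · refine le_of_mul_le_mul_right ?_ hA
    nlinarith [mul_le_mul_of_nonneg_left hCS hb, mul_le_mul_of_nonneg_left h (Nat.cast_nonneg #s)]

theorem lasso_error_bound_general
    {p : ℕ} (L : EuclideanSpace ℝ (Fin p) → ℝ)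
    (hconv : ConvexOn ℝ Set.univ L) (hsmooth : ContDiff ℝ 2 L)
    (βs : EuclideanSpace ℝ (Fin p))
    (q : ℕ) (hq : (Finset.univ.filter (fun j => βs j ≠ 0)).card = q)
    (lam : ℝ) (hlam : 0 < lam)
    (βt : EuclideanSpace ℝ (Fin p))
    (hmin : ∀ β : EuclideanSpace ℝ (Fin p),
      L βt + lam * ∑ j, |βt j| ≤ L β + lam * ∑ j, |β j|)
    (hgrad : ∀ j : Fin p, |fderiv ℝ L βs (EuclideanSpace.single j 1)| ≤ lam / 2)
    (b₁ : ℝ) (hb₁ : 0 < b₁)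
    (hRE : ∀ β ∈ segment ℝ βs βt, ∀ w : EuclideanSpace ℝ (Fin p), w ≠ 0 →
      (∑ j ∈ Finset.univ.filter (fun j => βs j = 0), |w j| ≤
        3 * ∑ j ∈ Finset.univ.filter (fun j => βs j ≠ 0), |w j|) →
      b₁ * ∑ j ∈ Finset.univ.filter (fun j => βs j ≠ 0), (w j) ^ 2 ≤
        fderiv ℝ (fun x => fderiv ℝ L x) β w w) :
    ‖βt - βs‖ ≤ ∑ j, |(βt - βs) j| ∧
      ∑ j, |(βt - βs) j| ≤ 16 * q * lam / b₁ := by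
  refine ⟨EuclideanSpace.norm_le_sum_abs _, ?_⟩
  set w := βt - βs
  set A := ∑ j ∈ univ.filter (fun j => βs j ≠ 0), |w j|
  set B := ∑ j ∈ univ.filter (fun j => βs j = 0), |w j|
  set C := ∑ j ∈ univ.filter (fun j => βs j ≠ 0), w j ^ 2
  have hsum : ∑ j, |w j| = A + B := by
    rw [← sum_filter_add_sum_filter_not univ (fun j => βs j ≠ 0)]
    simp only [not_not, A, B]
  have hbasic : L βt - L βs ≤ lam * (A - B) := by
    have := mul_le_mul_of_nonneg_left (EuclideanSpace.sum_abs_sub_sum_abs_le βs βt) hlam.le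
    linarith [hmin βs]
  have hgradw : -(lam / 2 * (A + B)) ≤ fderiv ℝ L βs w :=
    neg_le_of_abs_le (hsum ▸ EuclideanSpace.abs_apply_le_mul_sum_abs _ hgrad w)
  have hfirst : L βs + fderiv ℝ L βs w ≤ L βt :=
    hconv.add_fderiv_sub_le (mem_univ _) (mem_univ _) (hsmooth.differentiable two_ne_zero _)
  have hcone : B ≤ 3 * A := le_of_mul_le_mul_left (by linarith) hlam
  have hsecond : L βs + fderiv ℝ L βs w + b₁ * C / 2 ≤ L βt := by
    refine hsmooth.taylor_lower_bound_of_le_fderiv2 fun z hz => ?_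
    rcases eq_or_ne w 0 with hw | hw
    · have hC : C = 0 := by simp [C, hw]
      rw [hC, show βt - βs = 0 from hw]
      simp
    · exact hRE z hz w hw hcone
  have hCA : b₁ * C ≤ 3 * lam * A := by
    linarith [mul_nonneg hlam.le (sum_nonneg fun _ _ => abs_nonneg _ : 0 ≤ B)]
  have hbA : b₁ * A ≤ q * (3 * lam) :=
    hq ▸ mul_sum_abs_le_card_mul_of_mul_sum_sq_le hb₁.le (by positivity) (by linarith)
  rw [hsum, le_div_iff₀ hb₁]
  nlinarith [mul_nonneg (Nat.cast_nonneg q : (0 : ℝ) ≤ q) hlam.le]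

/-- Deterministic core of Lemma 2: under the restricted eigenvalue condition along the
segment joining `β*` and the Lasso minimizer `β̃`, and `‖∇L(β*)‖_∞ ≤ λ/2`, the Lasso
error satisfies `‖β̃ − β*‖₂ ≤ ‖β̃ − β*‖₁ ≤ 16 q λ / b₁`, with `q = card S* ≥ 1`. -/
theorem lasso_error_bound
    {p : ℕ} (L : EuclideanSpace ℝ (Fin p) → ℝ)
    (hconv : ConvexOn ℝ Set.univ L) (hsmooth : ContDiff ℝ 2 L)
    (βs : EuclideanSpace ℝ (Fin p))
    (q : ℕ) (hq : (Finset.univ.filter (fun j => βs j ≠ 0)).card = q) (hq1 : 1 ≤ q)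
    (lam : ℝ) (hlam : 0 < lam)
    (βt : EuclideanSpace ℝ (Fin p))
    (hmin : ∀ β : EuclideanSpace ℝ (Fin p),
      L βt + lam * ∑ j, |βt j| ≤ L β + lam * ∑ j, |β j|)
    (hgrad : ∀ j : Fin p, |fderiv ℝ L βs (EuclideanSpace.single j 1)| ≤ lam / 2)
    (b₁ : ℝ) (hb₁ : 0 < b₁)
    (hRE : ∀ β ∈ segment ℝ βs βt, ∀ w : EuclideanSpace ℝ (Fin p), w ≠ 0 →
      (∑ j ∈ Finset.univ.filter (fun j => βs j = 0), |w j| ≤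
        3 * ∑ j ∈ Finset.univ.filter (fun j => βs j ≠ 0), |w j|) →
      b₁ * ∑ j ∈ Finset.univ.filter (fun j => βs j ≠ 0), (w j) ^ 2 ≤
        fderiv ℝ (fun x => fderiv ℝ L x) β w w) :
    ‖βt - βs‖ ≤ ∑ j, |(βt - βs) j| ∧
      ∑ j, |(βt - βs) j| ≤ 16 * q * lam / b₁ :=
  lasso_error_bound_general L hconv hsmooth βs q hq lam hlam βt hmin hgrad b₁ hb₁ hRE
end
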